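/- arXiv:2404.15291 — 3 statements merged into one kernel-verified Lean document; each statement's English description precedes it below -/
import Mathlib

section
/- Let a, b, c ∈ ℝ with b > 0 and let τ > 0. With β = (ab+c)·(2b·ln b − τ·(ab−c))/(8b²π²), γ = −(ab+c)/(2bπ), and s_k = (ln b + 2kπi)/τ + β/k² + i·γ/k, there exist constants C > 0 and K ∈ ℕ such that for all integers k ≥ K one has b·s_k + c ≠ 0 and |e^{−s_k·τ} − (s_k − a)/(b·s_k + c)| ≤ C/k³; that is, the improved approximate poles s_k satisfy the characteristic-root relation e^{−s·τ} = (s − a)/(b·s + c) up to an error of order k^{−3}. -/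
/-- The improved approximate pole
`s_k = (ln b + 2kπi)/τ + β/k² + iγ/k` with
`β = (ab+c)(2b ln b − τ(ab−c))/(8b²π²)` and `γ = −(ab+c)/(2bπ)`. -/
noncomputable def skImproved (a b c τ : ℝ) (k : ℕ) : ℂ :=
  ((Real.log b : ℂ) + 2 * (k : ℂ) * (Real.pi : ℂ) * Complex.I) / (τ : ℂ)
    + (((a * b + c) * (2 * b * Real.log b - τ * (a * b - c)) / (8 * b ^ 2 * Real.pi ^ 2) : ℝ) : ℂ) / (k : ℂ) ^ 2
    + Complex.I * ((-(a * b + c) / (2 * b * Real.pi) : ℝ) : ℂ) / (k : ℂ)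

/-! Write `x = 1/k`. Then `s_k = u(x)/x` with `u(x) = 2πi/τ + (ln b/τ) x + iγ x² + β x³`, and
since `e^{-2πik} = 1` and `e^{-ln b} = 1/b`, also `e^{-s_k τ} = b⁻¹ e^{q(x)}` with
`q(x) = -τ (iγ x + β x²)`. So the residual is a function of `x` that is analytic at `0`, and
replacing `e^q` by `1 + q + q²/2` costs only `O(x³)`. The coefficients `γ` and `β` are exactly
the ones for which the `x` and `x²` coefficients of `(1 + q + q²/2)(b u + c x) − b (u − a x)`
vanish, which leaves a residual of order `x³ = k⁻³`. -/

open Complex Filter Topology Asymptotics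

namespace NeutralDelayPole

variable (a b c τ : ℝ)

noncomputable def gammaCoeff : ℝ := -(a * b + c) / (2 * b * Real.pi)

noncomputable def betaCoeff : ℝ :=
  (a * b + c) * (2 * b * Real.log b - τ * (a * b - c)) / (8 * b ^ 2 * Real.pi ^ 2)

noncomputable def scaledPole (x : ℂ) : ℂ :=
  2 * Real.pi * I / τ + Real.log b / τ * x + I * gammaCoeff a b c * x ^ 2
    + betaCoeff a b c τ * x ^ 3

noncomputable def expCorrection (x : ℂ) : ℂ :=
  -τ * (I * gammaCoeff a b c * x + betaCoeff a b c τ * x ^ 2)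

noncomputable def scaledDenominator (x : ℂ) : ℂ :=
  b * scaledPole a b c τ x + c * x

noncomputable def scaledResidual (x : ℂ) : ℂ :=
  (b : ℂ)⁻¹ * exp (expCorrection a b c τ x)
    - (scaledPole a b c τ x - a * x) / scaledDenominator a b c τ x

variable {a b c τ}

theorem gammaCoeff_relation (hb : b ≠ 0) :
    2 * Real.pi * b * gammaCoeff a b c + (a * b + c) = 0 := by
  unfold gammaCoeff
  field_simp
  ring

theorem betaCoeff_relation (hb : b ≠ 0) :
    gammaCoeff a b c * (b * Real.log b + τ * c)
      + Real.pi * b * (2 * betaCoeff a b c τ + τ * gammaCoeff a b c ^ 2) = 0 := by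
  unfold gammaCoeff betaCoeff
  field_simp
  ring

theorem exists_continuous_cofactor_of_coeff {a b c A B g β q₁ q₂ : ℂ}
    (h₁ : q₁ * B * b + (a * b + c) = 0)
    (h₂ : 2 * q₁ * (A * b + c) + (2 * q₂ + q₁ ^ 2) * B * b = 0) :
    ∃ W : ℂ → ℂ, Continuous W ∧ ∀ x,
      let u := B + A * x + g * x ^ 2 + β * x ^ 3
      let q := q₁ * x + q₂ * x ^ 2
      (1 + q + q ^ 2 / 2) * (b * u + c * x) - b * (u - a * x) = x ^ 3 * W x :=
  ⟨fun x => q₁ * b * (g + β * x)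
      + (q₂ + q₁ ^ 2 / 2) * (A * b + c + b * g * x + b * β * x ^ 2)
      + q₂ * (q₁ + q₂ * x / 2) * (b * (B + A * x + g * x ^ 2 + β * x ^ 3) + c * x),
    by fun_prop, fun x => by linear_combination x * h₁ + x ^ 2 / 2 * h₂⟩

theorem exists_continuous_cofactor (hb : b ≠ 0) (hτ : τ ≠ 0) :
    ∃ W : ℂ → ℂ, Continuous W ∧ ∀ x,
      (1 + expCorrection a b c τ x + expCorrection a b c τ x ^ 2 / 2)
          * scaledDenominator a b c τ x - b * (scaledPole a b c τ x - a * x) = x ^ 3 * W x := by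
  have hτ' : (τ : ℂ) ≠ 0 := ofReal_ne_zero.2 hτ
  have h₁ := congrArg ((↑) : ℝ → ℂ) (gammaCoeff_relation (a := a) (c := c) hb)
  have h₂ := congrArg ((↑) : ℝ → ℂ) (betaCoeff_relation (a := a) (c := c) (τ := τ) hb)
  push_cast at h₁ h₂
  set γ : ℂ := (gammaCoeff a b c : ℂ)
  set β : ℂ := (betaCoeff a b c τ : ℂ)
  obtain ⟨W, hW, hWx⟩ := exists_continuous_cofactor_of_coeff (a := (a : ℂ)) (b := b) (c := c)
    (A := Real.log b / τ) (B := 2 * Real.pi * I / τ) (g := I * γ) (β := β)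
    (q₁ := -τ * I * γ) (q₂ := -τ * β)
    (by field_simp; linear_combination h₁ - 2 * Real.pi * γ * b * I_sq)
    (by field_simp; linear_combination -2 * I * h₂ + 2 * I * Real.pi * b * τ * γ ^ 2 * I_sq)
  refine ⟨W, hW, fun x => ?_⟩
  simp only [expCorrection, scaledDenominator, scaledPole]
  linear_combination hWx x

theorem continuous_scaledDenominator : Continuous (scaledDenominator a b c τ) := by
  unfold scaledDenominator scaledPole
  fun_prop

theorem scaledDenominator_zero_ne_zero (hb : b ≠ 0) (hτ : τ ≠ 0) :
    scaledDenominator a b c τ 0 ≠ 0 := by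
  simp [scaledDenominator, scaledPole, hb, hτ, Real.pi_ne_zero]

theorem expCorrection_isBigO_id : expCorrection a b c τ =O[𝓝 0] id := by
  have hdiff : Differentiable ℂ (expCorrection a b c τ) := by
    unfold expCorrection
    fun_prop
  have h0 : expCorrection a b c τ 0 = 0 := by simp [expCorrection]
  exact (hdiff 0).isBigO_sub.congr (fun x => by rw [h0, sub_zero]) (fun x => sub_zero x)

theorem scaledResidual_isBigO (hb : b ≠ 0) (hτ : τ ≠ 0) :
    scaledResidual a b c τ =O[𝓝 0] (· ^ 3) := by
  obtain ⟨W, hW, hWx⟩ := exists_continuous_cofactor (a := a) (c := c) hb hτ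
  set D := scaledDenominator a b c τ
  set q := expCorrection a b c τ
  have hD : ∀ᶠ x in 𝓝 0, D x ≠ 0 :=
    continuous_scaledDenominator.continuousAt.eventually_ne
      (scaledDenominator_zero_ne_zero hb hτ)
  have hq : Tendsto q (𝓝 0) (𝓝 0) := expCorrection_isBigO_id.trans_tendsto tendsto_id
  have hexp :
      (fun x => (b : ℂ)⁻¹ * (exp (q x) - (1 + q x + q x ^ 2 / 2))) =O[𝓝 0] (· ^ 3) := by
    refine ((((Complex.exp_sub_sum_range_isBigO_pow 3).comp_tendsto hq).trans
      (expCorrection_isBigO_id.pow 3)).const_mul_left (b : ℂ)⁻¹).congr_left fun x => ?_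
    simp [Finset.sum_range_succ, Nat.factorial]
  have hcof : (fun x => x ^ 3 * ((b : ℂ)⁻¹ * W x / D x)) =O[𝓝 0] (· ^ 3) := by
    have hbdd : (fun x => (b : ℂ)⁻¹ * W x / D x) =O[𝓝 0] (fun _ => (1 : ℂ)) :=
      (((hW.tendsto 0).const_mul _).div (continuous_scaledDenominator.tendsto 0)
        (scaledDenominator_zero_ne_zero hb hτ)).isBigO_one ℂ
    simpa using (isBigO_refl (· ^ 3) (𝓝 (0 : ℂ))).mul hbdd
  refine (hexp.add hcof).congr' ?_ EventuallyEq.rfl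
  filter_upwards [hD] with x hx
  change _ = (b : ℂ)⁻¹ * exp (q x) - (scaledPole a b c τ x - a * x) / D x
  rw [show x ^ 3 * ((b : ℂ)⁻¹ * W x / D x) = (b : ℂ)⁻¹ * (x ^ 3 * W x) / D x by ring,
    ← hWx x]
  field_simp [ofReal_ne_zero.2 hb]
  ring

theorem skImproved_eq (k : ℕ) :
    skImproved a b c τ k
      = 2 * k * Real.pi * I / τ + Real.log b / τ + I * gammaCoeff a b c * (k : ℂ)⁻¹
        + betaCoeff a b c τ * (k : ℂ)⁻¹ ^ 2 := by
  simp only [skImproved, gammaCoeff, betaCoeff]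
  ring

theorem skImproved_eq_mul_scaledPole {k : ℕ} (hk : k ≠ 0) :
    skImproved a b c τ k = k * scaledPole a b c τ (k : ℂ)⁻¹ := by
  have hk' : (k : ℂ) ≠ 0 := Nat.cast_ne_zero.2 hk
  rw [skImproved_eq, scaledPole]
  field_simp

theorem exp_neg_skImproved_mul (hb : 0 < b) (hτ : τ ≠ 0) (k : ℕ) :
    exp (-skImproved a b c τ k * τ)
      = (b : ℂ)⁻¹ * exp (expCorrection a b c τ (k : ℂ)⁻¹) := by
  have hτ' : (τ : ℂ) ≠ 0 := ofReal_ne_zero.2 hτ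
  have h : -skImproved a b c τ k * τ
      = -Real.log b + (-k : ℤ) * (2 * Real.pi * I) + expCorrection a b c τ (k : ℂ)⁻¹ := by
    rw [skImproved_eq, expCorrection]
    push_cast
    linear_combination (-(2 * k * Real.pi * I + Real.log b)) * mul_inv_cancel₀ hτ'
  rw [h, exp_add, exp_add, exp_int_mul_two_pi_mul_I, mul_one, exp_neg, ← ofReal_exp,
    Real.exp_log hb]

theorem mul_skImproved_add {k : ℕ} (hk : k ≠ 0) :
    b * skImproved a b c τ k + c = k * scaledDenominator a b c τ (k : ℂ)⁻¹ := by
  have hk' : (k : ℂ) ≠ 0 := Nat.cast_ne_zero.2 hk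
  rw [skImproved_eq_mul_scaledPole hk, scaledDenominator]
  field_simp

theorem skImproved_residual_eq (hb : 0 < b) (hτ : τ ≠ 0) {k : ℕ} (hk : k ≠ 0) :
    exp (-skImproved a b c τ k * τ)
        - (skImproved a b c τ k - a) / (b * skImproved a b c τ k + c)
      = scaledResidual a b c τ (k : ℂ)⁻¹ := by
  have hk' : (k : ℂ) ≠ 0 := Nat.cast_ne_zero.2 hk
  have hnum :
      skImproved a b c τ k - a = k * (scaledPole a b c τ (k : ℂ)⁻¹ - a * (k : ℂ)⁻¹) := by
    rw [skImproved_eq_mul_scaledPole hk]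
    field_simp
  rw [exp_neg_skImproved_mul hb hτ, mul_skImproved_add hk, hnum, mul_div_mul_left _ _ hk',
    scaledResidual]

end NeutralDelayPole

open NeutralDelayPole

/-- the improved approximate poles `s_k` satisfy the characteristic-root
relation `e^{−sτ} = (s − a)/(b·s + c)` up to an error of order `k⁻³`. -/
theorem stmt_1 (a b c τ : ℝ) (hb : 0 < b) (hτ : 0 < τ) :
    ∃ C : ℝ, 0 < C ∧ ∃ K : ℕ, ∀ k : ℕ, K ≤ k →
      (b : ℂ) * skImproved a b c τ k + (c : ℂ) ≠ 0 ∧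
      ‖Complex.exp (-(skImproved a b c τ k) * (τ : ℂ))
          - (skImproved a b c τ k - (a : ℂ)) / ((b : ℂ) * skImproved a b c τ k + (c : ℂ))‖
        ≤ C / (k : ℝ) ^ 3 := by
  have hinv : Tendsto (fun k : ℕ => (k : ℂ)⁻¹) atTop (𝓝 0) :=
    tendsto_inv_atTop_nhds_zero_nat
  obtain ⟨C, hC, hbound⟩ :=
    ((scaledResidual_isBigO (a := a) (c := c) hb.ne' hτ.ne').comp_tendsto hinv).exists_pos
  have hden := hinv.eventually <| continuous_scaledDenominator.continuousAt.eventually_ne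
    (scaledDenominator_zero_ne_zero (a := a) (c := c) hb.ne' hτ.ne')
  obtain ⟨K, hK⟩ := eventually_atTop.1 <|
    hbound.bound.and <| hden.and <| eventually_ne_atTop 0
  refine ⟨C, hC, K, fun k hk => ?_⟩
  obtain ⟨hle, hD, hk0⟩ := hK k hk
  refine ⟨by rw [mul_skImproved_add hk0]; exact mul_ne_zero (Nat.cast_ne_zero.2 hk0) hD, ?_⟩
  rw [skImproved_residual_eq hb hτ.ne' hk0]
  simpa [div_eq_mul_inv] using hle
end

section
/- Let a, b, c ∈ ℝ with b > 0 and let τ > 0. For an integer k ≥ 1 set ŝ_k = (ln b + 2kπi)/τ. Then there exist constants C > 0 and K ∈ ℕ such that for all integers k ≥ K, b·ŝ_k + c ≠ 0 and |(ŝ_k − a)/(b·ŝ_k + c) − (1/b + i·(ab+c)·τ/(2·b²·π·k) − τ²·(ab+c)·(b·ln(b)/τ + c)/(4·b³·π²·k²))| ≤ C/k³. -/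
/-!
With `α = log b + cτ/b` and `z = 2πk·i` one has `b·ŝ_k + c = (b/τ)(z + α)`, so
`(ŝ_k − a)/(b·ŝ_k + c) = 1/b − (ab + c)τ/b² · (z + α)⁻¹`. Expanding
`(z + α)⁻¹ = z⁻¹ − α/z² + α²/(z²(z + α))` produces the two correction terms, and the
remainder is `O(k⁻³)` because `|z + α| ≥ |Im (z + α)| = 2πk`.
-/

open Complex

lemma div_affine_eq_one_div_sub {K : Type*} [Field K] {a b c s : K} (hb : b ≠ 0)
    (hs : b * s + c ≠ 0) :
    (s - a) / (b * s + c) = 1 / b - (a * b + c) / (b * (b * s + c)) := by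
  rw [div_sub_div _ _ hb (mul_ne_zero hb hs),
    div_eq_div_iff hs (mul_ne_zero hb (mul_ne_zero hb hs))]
  ring

lemma inv_add_eq_inv_sub_div_sq_add {K : Type*} [Field K] {z α : K} (hz : z ≠ 0)
    (hzα : z + α ≠ 0) :
    (z + α)⁻¹ = z⁻¹ - α / z ^ 2 + α ^ 2 / (z ^ 2 * (z + α)) := by
  field_simp
  ring

lemma div_affine_sub_expansion {K : Type*} [Field K] {a b c τ s z α : K} (hb : b ≠ 0)
    (hτ : τ ≠ 0) (hz : z ≠ 0) (hzα : z + α ≠ 0) (hs : b * s + c = b / τ * (z + α)) :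
    (s - a) / (b * s + c) - (1 / b - (a * b + c) * τ / b ^ 2 * (z⁻¹ - α / z ^ 2))
      = -((a * b + c) * τ / b ^ 2) * (α ^ 2 / (z ^ 2 * (z + α))) := by
  have hs₀ : b * s + c ≠ 0 := by
    rw [hs]
    exact mul_ne_zero (div_ne_zero hb hτ) hzα
  have hquot : (a * b + c) / (b * (b * s + c)) = (a * b + c) * τ / b ^ 2 * (z + α)⁻¹ := by
    rw [hs]
    field_simp
  rw [div_affine_eq_one_div_sub hb hs₀, hquot, inv_add_eq_inv_sub_div_sq_add hz hzα]
  ring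

lemma abs_le_norm_add_mul_I (α y : ℝ) : |y| ≤ ‖(α + y * I : ℂ)‖ := by
  simpa using abs_im_le_norm (α + y * I : ℂ)

lemma add_mul_I_ne_zero (α : ℝ) {y : ℝ} (hy : y ≠ 0) : (α + y * I : ℂ) ≠ 0 :=
  norm_pos_iff.mp ((abs_pos.mpr hy).trans_le (abs_le_norm_add_mul_I α y))

lemma norm_div_add_mul_I_le (x : ℂ) (α : ℝ) {y : ℝ} (hy : y ≠ 0) :
    ‖x / (α + y * I)‖ ≤ ‖x‖ / |y| := by
  rw [norm_div]
  gcongr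
  exact abs_le_norm_add_mul_I α y

noncomputable def leadingRoot (b τ t : ℝ) : ℂ := (Real.log b + 2 * t * Real.pi * I) / τ

lemma mul_leadingRoot_add {b τ : ℝ} (c : ℝ) (hb : b ≠ 0) (hτ : τ ≠ 0) (t : ℝ) :
    b * leadingRoot b τ t + c
      = b / τ * ((Real.log b + c * τ / b : ℝ) + (2 * t * Real.pi : ℝ) * I) := by
  have hbC : (b : ℂ) ≠ 0 := by exact_mod_cast hb
  have hτC : (τ : ℂ) ≠ 0 := by exact_mod_cast hτ
  rw [leadingRoot]
  push_cast
  field_simp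
  ring

lemma leadingRoot_expansion_remainder (a : ℝ) {b τ : ℝ} (c : ℝ) (hb : b ≠ 0) (hτ : τ ≠ 0)
    {t : ℝ} (ht : t ≠ 0) :
    let s := leadingRoot b τ t
    let α := Real.log b + c * τ / b
    (s - a) / (b * s + c)
        - (1 / (b : ℂ) + I * ((a * b + c : ℝ) : ℂ) * τ / (2 * (b : ℂ) ^ 2 * Real.pi * t)
          - (τ : ℂ) ^ 2 * ((a * b + c : ℝ) : ℂ) * (b * Real.log b / τ + c)
            / (4 * (b : ℂ) ^ 3 * Real.pi ^ 2 * t ^ 2))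
      = ((a * b + c) * τ * α ^ 2 / (4 * b ^ 2 * Real.pi ^ 2 * t ^ 2) : ℝ)
          / ((α : ℂ) + (2 * t * Real.pi : ℝ) * I) := by
  intro s α
  have hbC : (b : ℂ) ≠ 0 := by exact_mod_cast hb
  have hτC : (τ : ℂ) ≠ 0 := by exact_mod_cast hτ
  have htC : (t : ℂ) ≠ 0 := by exact_mod_cast ht
  have hπC : (Real.pi : ℂ) ≠ 0 := by exact_mod_cast Real.pi_ne_zero
  have hy : 2 * t * Real.pi ≠ 0 := by positivity
  have hz : ((2 * t * Real.pi : ℝ) * I : ℂ) ≠ 0 := by simpa using add_mul_I_ne_zero 0 hy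
  have hzα : ((2 * t * Real.pi : ℝ) * I : ℂ) + α ≠ 0 := by
    rw [add_comm]
    exact add_mul_I_ne_zero α hy
  have hs : (b : ℂ) * s + c = b / τ * (((2 * t * Real.pi : ℝ) * I : ℂ) + α) := by
    rw [add_comm _ (α : ℂ)]
    exact mul_leadingRoot_add c hb hτ t
  have key := div_affine_sub_expansion (a := (a : ℂ)) hbC hτC hz hzα hs
  have hzinv : (((2 * t * Real.pi : ℝ) : ℂ) * I)⁻¹ = -I / (2 * t * Real.pi) := by
    rw [mul_inv, inv_I]
    push_cast
    ring
  have hzsq : (((2 * t * Real.pi : ℝ) : ℂ) * I) ^ 2 = -(2 * t * Real.pi) ^ 2 := by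
    rw [mul_pow, I_sq]
    push_cast
    ring
  rw [hzinv, hzsq, add_comm _ (α : ℂ)] at key
  convert key using 2
  all_goals
    simp only [α]
    push_cast
    field_simp
    ring

/-- asymptotic expansion of `(ŝ_k − a)/(b·ŝ_k + c)` at the leading-order
pole approximations `ŝ_k = (ln b + 2kπi)/τ`:
`(ŝ_k − a)/(b ŝ_k + c) = 1/b + i(ab+c)τ/(2b²πk) − τ²(ab+c)(b·ln(b)/τ + c)/(4b³π²k²) + O(k⁻³)`. -/
theorem stmt_9 (a b c τ : ℝ) (hb : 0 < b) (hτ : 0 < τ) :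
    ∃ C : ℝ, 0 < C ∧ ∃ K : ℕ, ∀ k : ℕ, K ≤ k →
      (let shat : ℂ := ((Real.log b : ℂ) + 2 * (k : ℂ) * (Real.pi : ℂ) * Complex.I) / (τ : ℂ)
      (b : ℂ) * shat + (c : ℂ) ≠ 0 ∧
      ‖(shat - (a : ℂ)) / ((b : ℂ) * shat + (c : ℂ))
          - (1 / (b : ℂ)
              + Complex.I * ((a * b + c : ℝ) : ℂ) * (τ : ℂ) / (2 * (b : ℂ) ^ 2 * (Real.pi : ℂ) * (k : ℂ))
              - (τ : ℂ) ^ 2 * ((a * b + c : ℝ) : ℂ) * ((b : ℂ) * (Real.log b : ℂ) / (τ : ℂ) + (c : ℂ))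
                  / (4 * (b : ℂ) ^ 3 * (Real.pi : ℂ) ^ 2 * (k : ℂ) ^ 2))‖
        ≤ C / (k : ℝ) ^ 3) := by
  set α := Real.log b + c * τ / b
  set C₀ := |a * b + c| * τ * α ^ 2 / (8 * b ^ 2 * Real.pi ^ 3)
  refine ⟨C₀ + 1, by positivity, 1, fun k hk => ?_⟩
  intro shat
  have hk₀ : (0 : ℝ) < k := by exact_mod_cast hk
  have hy : 2 * (k : ℝ) * Real.pi ≠ 0 := by positivity
  have hshat : shat = leadingRoot b τ k := by simp [shat, leadingRoot]
  have hrem := leadingRoot_expansion_remainder a c hb.ne' hτ.ne' hk₀.ne'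
  simp only [Complex.ofReal_natCast] at hrem
  refine ⟨?_, ?_⟩
  · rw [hshat, mul_leadingRoot_add c hb.ne' hτ.ne']
    exact mul_ne_zero (div_ne_zero (by exact_mod_cast hb.ne') (by exact_mod_cast hτ.ne'))
      (add_mul_I_ne_zero _ hy)
  · rw [hshat, hrem]
    calc _ ≤ _ := norm_div_add_mul_I_le _ _ hy
      _ = C₀ / (k : ℝ) ^ 3 := by
        have hden : (0 : ℝ) < 4 * b ^ 2 * Real.pi ^ 2 * (k : ℝ) ^ 2 := by positivity
        rw [Complex.norm_real, Real.norm_eq_abs, abs_div, abs_mul, abs_mul, abs_of_pos hτ, abs_sq,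
          abs_of_pos hden, abs_of_pos (by positivity : (0 : ℝ) < 2 * k * Real.pi)]
        simp only [C₀, α]
        field_simp
        ring
      _ ≤ (C₀ + 1) / (k : ℝ) ^ 3 := by gcongr; linarith
end

section
/- Let a, b, c ∈ ℝ, τ > 0, and let y : ℝ → ℝ be continuously differentiable on [−τ, ∞) and satisfy y′(t) = a·y(t) + b·y′(t−τ) + c·y(t−τ) for all t > 0. Suppose there exist M > 0 and σ > 0 with |y(t)| ≤ M·e^{σ·t} and |y′(t)| ≤ M·e^{σ·t} for all t ≥ −τ. Then for every s ∈ ℂ with Re(s) > σ, the integrals below converge and (s − a − (b·s + c)·e^{−s·τ})·∫_0^∞ y(t)·e^{−s·t} dt = y(0) − b·y(−τ) + (b·s + c)·e^{−s·τ}·∫_{−τ}^0 y(v)·e^{−s·v} dv. -/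
/-!
Take Laplace transforms over `(0, ∞)`. Since `Re s > σ`, all transforms involved converge and
`y(t)·e^{-st} → 0` at infinity, so integration by parts gives `L[y'] = s·L[y] - y(0)`, and,
applied to the delayed solution `z(t) = y(t - τ)`, `L[z'] = s·L[z] - y(-τ)`. The substitution
`u = t - τ` gives `L[z] = e^{-sτ}·(∫_{-τ}^0 y(v)e^{-sv} dv + L[y])`. The equation turns into
`L[y'] = a·L[y] + b·L[z'] + c·L[z]`, and eliminating `L[y']`, `L[z']`, `L[z]` leaves the
identity.
-/

/-- Derivative of the solution, taken within `[−τ, ∞)`. -/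
noncomputable def yd (τ : ℝ) (y : ℝ → ℝ) : ℝ → ℝ := derivWithin y (Set.Ici (-τ))

open MeasureTheory Set Filter Topology

noncomputable def laplaceTransform (f : ℝ → ℂ) (s : ℂ) : ℂ :=
  ∫ t in Ioi 0, f t * Complex.exp (-s * t)

theorem norm_cexp_neg_mul_ofReal (s : ℂ) (t : ℝ) :
    ‖Complex.exp (-s * t)‖ = Real.exp (-s.re * t) := by
  simp [Complex.norm_exp, Complex.mul_re]

theorem hasDerivAt_cexp_neg_mul_ofReal (s : ℂ) (t : ℝ) :
    HasDerivAt (fun t : ℝ => Complex.exp (-s * t)) (-s * Complex.exp (-s * t)) t := by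
  simpa [mul_comm] using ((hasDerivAt_id (t : ℂ)).const_mul (-s)).cexp.comp_ofReal

theorem norm_mul_cexp_le {z s : ℂ} {M σ t : ℝ} (hz : ‖z‖ ≤ M * Real.exp (σ * t)) :
    ‖z * Complex.exp (-s * t)‖ ≤ M * Real.exp (-(s.re - σ) * t) :=
  calc ‖z * Complex.exp (-s * t)‖
        ≤ M * Real.exp (σ * t) * Real.exp (-s.re * t) := by
        rw [norm_mul, norm_cexp_neg_mul_ofReal]
        exact mul_le_mul_of_nonneg_right hz (Real.exp_nonneg _)
    _ = M * Real.exp (-(s.re - σ) * t) := by rw [mul_assoc, ← Real.exp_add]; ring_nf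

section ExponentialOrder

variable {f : ℝ → ℂ} {s : ℂ} {M σ : ℝ}

theorem integrableOn_Ioi_mul_cexp {x₀ : ℝ} (hf : ContinuousOn f (Ioi x₀)) (hs : σ < s.re)
    (hbound : ∀ t ∈ Ioi x₀, ‖f t‖ ≤ M * Real.exp (σ * t)) :
    IntegrableOn (fun t : ℝ => f t * Complex.exp (-s * t)) (Ioi x₀) := by
  refine Integrable.mono' ((exp_neg_integrableOn_Ioi x₀ (sub_pos.mpr hs)).const_mul M)
    ((hf.mul (by fun_prop : Continuous fun t : ℝ => Complex.exp (-s * t)).continuousOn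
      ).aestronglyMeasurable measurableSet_Ioi) ?_
  filter_upwards [ae_restrict_mem measurableSet_Ioi] with t ht
  exact norm_mul_cexp_le (hbound t ht)

theorem tendsto_mul_cexp_atTop_zero (hs : σ < s.re)
    (hbound : ∀ᶠ t in atTop, ‖f t‖ ≤ M * Real.exp (σ * t)) :
    Tendsto (fun t : ℝ => f t * Complex.exp (-s * t)) atTop (𝓝 0) := by
  have hdecay : Tendsto (fun t : ℝ => M * Real.exp (-(s.re - σ) * t)) atTop (𝓝 0) := by
    simpa using (Real.tendsto_exp_atBot.comp
      (tendsto_id.const_mul_atTop_of_neg (by linarith : -(s.re - σ) < 0))).const_mul M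
  exact squeeze_zero_norm' (hbound.mono fun t ht => norm_mul_cexp_le ht) hdecay

end ExponentialOrder

theorem laplaceTransform_deriv {f f' : ℝ → ℂ} {s : ℂ}
    (hf : ContinuousWithinAt f (Ici 0) 0) (hderiv : ∀ t ∈ Ioi (0 : ℝ), HasDerivAt f (f' t) t)
    (hfi : IntegrableOn (fun t : ℝ => f t * Complex.exp (-s * t)) (Ioi 0))
    (hf'i : IntegrableOn (fun t : ℝ => f' t * Complex.exp (-s * t)) (Ioi 0))
    (htend : Tendsto (fun t : ℝ => f t * Complex.exp (-s * t)) atTop (𝓝 0)) :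
    laplaceTransform f' s = s * laplaceTransform f s - f 0 := by
  have hcont : Tendsto (fun t : ℝ => f t * Complex.exp (-s * t)) (𝓝[>] 0) (𝓝 (f 0)) := by
    have h := ((hf.mono Ioi_subset_Ici_self).mul
      (hasDerivAt_cexp_neg_mul_ofReal s 0).continuousAt.continuousWithinAt).tendsto
    simp only [Pi.mul_apply, Complex.ofReal_zero, mul_zero, Complex.exp_zero, mul_one] at h
    exact h
  have hibp := integral_Ioi_mul_deriv_eq_deriv_mul (a' := f 0) (b' := 0)
    hderiv (fun t _ => hasDerivAt_cexp_neg_mul_ofReal s t)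
    (IntegrableOn.congr_fun (hfi.const_mul (-s)) (fun t _ => by simp only [Pi.mul_apply]; ring)
      measurableSet_Ioi) hf'i hcont htend
  simp only [mul_left_comm _ (-s), integral_const_mul] at hibp
  unfold laplaceTransform
  linear_combination hibp

theorem setIntegral_Ioi_comp_sub_right {E : Type*} [NormedAddCommGroup E] [NormedSpace ℝ E]
    (f : ℝ → E) (a d : ℝ) : ∫ t in Ioi a, f (t - d) = ∫ t in Ioi (a - d), f t := by
  have hpre : (· - d) ⁻¹' Ioi (a - d) = Ioi a := by ext; simp
  rw [← (measurePreserving_sub_right volume d).setIntegral_preimage_emb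
    (MeasurableEquiv.subRight d).measurableEmbedding f (Ioi (a - d)), hpre]

theorem laplaceTransform_comp_sub {g : ℝ → ℂ} {s : ℂ} {τ : ℝ} (hτ : 0 ≤ τ)
    (hg : IntegrableOn (fun t : ℝ => g t * Complex.exp (-s * t)) (Ioi (-τ))) :
    laplaceTransform (fun t => g (t - τ)) s =
      Complex.exp (-s * τ) *
        ((∫ v in -τ..0, g v * Complex.exp (-s * v)) + laplaceTransform g s) := by
  have hshift : ∀ t : ℝ, g (t - τ) * Complex.exp (-s * t)
      = Complex.exp (-s * τ) * (g (t - τ) * Complex.exp (-s * ↑(t - τ))) := by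
    intro t
    rw [mul_left_comm, ← Complex.exp_add]
    push_cast
    ring_nf
  unfold laplaceTransform
  simp only [hshift, integral_const_mul, setIntegral_Ioi_comp_sub_right
    (fun t : ℝ => g t * Complex.exp (-s * t)), zero_sub]
  rw [intervalIntegral.integral_interval_add_Ioi hg
    (hg.mono_set (Ioi_subset_Ioi (neg_nonpos.mpr hτ)))]

theorem laplaceTransform_eq_linear_combination {f g h k : ℝ → ℂ} {s : ℂ} (a b c : ℂ)
    (hg : IntegrableOn (fun t : ℝ => g t * Complex.exp (-s * t)) (Ioi 0))
    (hh : IntegrableOn (fun t : ℝ => h t * Complex.exp (-s * t)) (Ioi 0))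
    (hk : IntegrableOn (fun t : ℝ => k t * Complex.exp (-s * t)) (Ioi 0))
    (heq : ∀ t ∈ Ioi (0 : ℝ), f t = a * g t + b * h t + c * k t) :
    laplaceTransform f s =
      a * laplaceTransform g s + b * laplaceTransform h s + c * laplaceTransform k s := by
  simp only [laplaceTransform, ← integral_const_mul]
  rw [← integral_add (hg.const_mul a) (hh.const_mul b), ← integral_add _ (hk.const_mul c)]
  · refine setIntegral_congr_fun measurableSet_Ioi fun t ht => ?_
    simp only [heq t ht]
    ring
  · exact (hg.const_mul a).add (hh.const_mul b)

section ShiftedExponentialOrder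

variable {g g' : ℝ → ℝ} {τ M σ : ℝ} {s : ℂ}

theorem norm_ofReal_comp_sub_le (hgrow : ∀ t, -τ ≤ t → |g t| ≤ M * Real.exp (σ * t))
    {δ t : ℝ} (ht : δ - τ ≤ t) :
    ‖(g (t - δ) : ℂ)‖ ≤ M * Real.exp (-σ * δ) * Real.exp (σ * t) := by
  rw [Complex.norm_real, Real.norm_eq_abs, mul_assoc, ← Real.exp_add]
  convert hgrow (t - δ) (by linarith) using 3
  ring

theorem integrableOn_ofReal_comp_sub_mul_cexp (hg : ContinuousOn g (Ici (-τ)))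
    (hgrow : ∀ t, -τ ≤ t → |g t| ≤ M * Real.exp (σ * t)) (hs : σ < s.re)
    {δ x₀ : ℝ} (hx₀ : δ - τ ≤ x₀) :
    IntegrableOn (fun t : ℝ => (g (t - δ) : ℂ) * Complex.exp (-s * t)) (Ioi x₀) := by
  refine integrableOn_Ioi_mul_cexp ?_ hs fun t ht => norm_ofReal_comp_sub_le hgrow
    (hx₀.trans (le_of_lt ht))
  refine Complex.continuous_ofReal.comp_continuousOn
    (hg.comp (continuous_sub_right δ).continuousOn fun t ht => ?_)
  simp only [mem_Ioi, mem_Ici] at ht ⊢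
  linarith

theorem laplaceTransform_deriv_comp_sub (hg : ContinuousOn g (Ici (-τ)))
    (hg' : ContinuousOn g' (Ici (-τ))) (hderiv : ∀ t, -τ < t → HasDerivAt g (g' t) t)
    (hgrow : ∀ t, -τ ≤ t → |g t| ≤ M * Real.exp (σ * t))
    (hgrow' : ∀ t, -τ ≤ t → |g' t| ≤ M * Real.exp (σ * t)) (hs : σ < s.re)
    {δ : ℝ} (hδτ : δ ≤ τ) :
    laplaceTransform (fun t => (g' (t - δ) : ℂ)) s =
      s * laplaceTransform (fun t => (g (t - δ) : ℂ)) s - g (-δ) := by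
  have hcont : ContinuousWithinAt (fun t : ℝ => (g (t - δ) : ℂ)) (Ici 0) 0 := by
    refine Complex.continuous_ofReal.continuousAt.comp_continuousWithinAt
      ((hg (0 - δ) (by simp; linarith)).comp (x := 0)
        (continuous_sub_right δ).continuousWithinAt fun t ht => ?_)
    simp only [mem_Ici] at ht ⊢
    linarith
  simpa only [zero_sub] using laplaceTransform_deriv hcont
    (fun t ht => ((hderiv (t - δ) (by simp only [mem_Ioi] at ht; linarith)).comp_sub_const
      t δ).ofReal_comp)
    (integrableOn_ofReal_comp_sub_mul_cexp hg hgrow hs (by linarith))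
    (integrableOn_ofReal_comp_sub_mul_cexp hg' hgrow' hs (by linarith))
    (tendsto_mul_cexp_atTop_zero hs (eventually_ge_atTop (δ - τ) |>.mono
      fun t ht => norm_ofReal_comp_sub_le hgrow ht))

end ShiftedExponentialOrder

theorem stmt_10_general (a b c τ : ℝ) (hτ : 0 < τ) (y : ℝ → ℝ)
    (hy : ContDiffOn ℝ 1 y (Set.Ici (-τ)))
    (hode : ∀ t : ℝ, 0 < t →
      yd τ y t = a * y t + b * yd τ y (t - τ) + c * y (t - τ))
    (M σ : ℝ)
    (hgrow : ∀ t : ℝ, -τ ≤ t → |y t| ≤ M * Real.exp (σ * t))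
    (hgrow' : ∀ t : ℝ, -τ ≤ t → |yd τ y t| ≤ M * Real.exp (σ * t))
    (s : ℂ) (hs : σ < s.re) :
    MeasureTheory.IntegrableOn (fun t : ℝ => (y t : ℂ) * Complex.exp (-s * (t : ℂ)))
        (Set.Ioi (0 : ℝ)) ∧
    (s - (a : ℂ) - ((b : ℂ) * s + (c : ℂ)) * Complex.exp (-s * (τ : ℂ)))
        * ∫ t in Set.Ioi (0 : ℝ), (y t : ℂ) * Complex.exp (-s * (t : ℂ))
      = ((y 0 - b * y (-τ) : ℝ) : ℂ)
        + ((b : ℂ) * s + (c : ℂ)) * Complex.exp (-s * (τ : ℂ))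
            * ∫ v in (-τ : ℝ)..0, (y v : ℂ) * Complex.exp (-s * (v : ℂ)) := by
  have hycont : ContinuousOn y (Ici (-τ)) := hy.continuousOn
  have hydcont : ContinuousOn (yd τ y) (Ici (-τ)) :=
    hy.continuousOn_derivWithin (uniqueDiffOn_Ici _) le_rfl
  have hderiv : ∀ t, -τ < t → HasDerivAt y (yd τ y t) t := fun t ht =>
    ((hy.differentiableOn one_ne_zero) t ht.le).hasDerivWithinAt.hasDerivAt (Ici_mem_nhds ht)
  have hIy : IntegrableOn (fun t : ℝ => (y t : ℂ) * Complex.exp (-s * t)) (Ioi (-τ)) := by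
    simpa only [sub_zero] using
      integrableOn_ofReal_comp_sub_mul_cexp hycont hgrow hs (δ := 0) (x₀ := -τ) (by simp)
  have hIy₀ := hIy.mono_set (Ioi_subset_Ioi (neg_nonpos.mpr hτ.le))
  have hLderiv :=
    laplaceTransform_deriv_comp_sub hycont hydcont hderiv hgrow hgrow' hs (δ := 0) hτ.le
  simp only [sub_zero, neg_zero] at hLderiv
  have hLderiv_delay :=
    laplaceTransform_deriv_comp_sub hycont hydcont hderiv hgrow hgrow' hs (δ := τ) le_rfl
  have hLdelay := laplaceTransform_comp_sub hτ.le hIy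
  have hLode :=
    laplaceTransform_eq_linear_combination (f := fun t => (yd τ y t : ℂ)) a b c hIy₀
    (integrableOn_ofReal_comp_sub_mul_cexp hydcont hgrow' hs (δ := τ) (x₀ := 0) (by simp))
    (integrableOn_ofReal_comp_sub_mul_cexp hycont hgrow hs (δ := τ) (x₀ := 0) (by simp))
    fun t ht => by simp [hode t ht]
  refine ⟨hIy₀, ?_⟩
  change _ * laplaceTransform (fun t => (y t : ℂ)) s = _
  push_cast
  linear_combination
    hLode - hLderiv + (b : ℂ) * hLderiv_delay + ((b : ℂ) * s + c) * hLdelay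

/-- if `y` is continuously differentiable on `[−τ, ∞)`, satisfies the
neutral delay differential equation `y′(t) = a·y(t) + b·y′(t−τ) + c·y(t−τ)` for `t > 0`,
and `y`, `y′` grow at most like `M·e^{σt}`, then for every `s` with `Re(s) > σ` the
Laplace integral converges and
`(s − a − (bs + c)e^{−sτ})·∫_0^∞ y(t)e^{−st} dt
  = y(0) − b·y(−τ) + (bs + c)e^{−sτ}·∫_{−τ}^0 y(v)e^{−sv} dv`. -/
theorem stmt_10 (a b c τ : ℝ) (hτ : 0 < τ) (y : ℝ → ℝ)
    (hy : ContDiffOn ℝ 1 y (Set.Ici (-τ)))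
    (hode : ∀ t : ℝ, 0 < t →
      yd τ y t = a * y t + b * yd τ y (t - τ) + c * y (t - τ))
    (M σ : ℝ) (hM : 0 < M) (hσ : 0 < σ)
    (hgrow : ∀ t : ℝ, -τ ≤ t → |y t| ≤ M * Real.exp (σ * t))
    (hgrow' : ∀ t : ℝ, -τ ≤ t → |yd τ y t| ≤ M * Real.exp (σ * t))
    (s : ℂ) (hs : σ < s.re) :
    MeasureTheory.IntegrableOn (fun t : ℝ => (y t : ℂ) * Complex.exp (-s * (t : ℂ)))
        (Set.Ioi (0 : ℝ)) ∧
    (s - (a : ℂ) - ((b : ℂ) * s + (c : ℂ)) * Complex.exp (-s * (τ : ℂ)))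
        * ∫ t in Set.Ioi (0 : ℝ), (y t : ℂ) * Complex.exp (-s * (t : ℂ))
      = ((y 0 - b * y (-τ) : ℝ) : ℂ)
        + ((b : ℂ) * s + (c : ℂ)) * Complex.exp (-s * (τ : ℂ))
            * ∫ v in (-τ : ℝ)..0, (y v : ℂ) * Complex.exp (-s * (v : ℂ)) :=
  stmt_10_general a b c τ hτ y hy hode M σ hgrow hgrow' s hs
end
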